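/- Let R ⊆ ℕ be sparse with enumeration (r_n), let A_1, ..., A_m be operators with A_1 not identically zero on R, and let 0 < ε < 1. Then for all sufficiently large Δ ∈ ℕ: for every tuple of indices n_1 ≥ n_2 + Δ, n_2 ≥ n_3 + Δ, ..., n_{m-1} ≥ n_m + Δ, n_m ≥ Δ, we have (1−ε)·|A_1(n_1)| < |A_1(n_1) + A_2(n_2) + ... + A_m(n_m)| < (1+ε)·|A_1(n_1)|. -/

import Mathlib

open Filter

/-- `opApp a k r n = Σ_{i=0}^{k} a_i · r(n+i)`. -/
def opApp (a : ℕ → ℤ) (k : ℕ) (r : ℕ → ℕ) (n : ℕ) : ℤ :=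
  ∑ i ∈ Finset.range (k + 1), a i * (r (n + i) : ℤ)

/-- Sparsity: trichotomy (S1) and condition (S2). -/
def IsSparse (r : ℕ → ℕ) : Prop :=
  ∀ (a : ℕ → ℤ) (k : ℕ),
    ((∀ n, opApp a k r n = 0) ∨ (∀ᶠ n in atTop, 0 < opApp a k r n) ∨
      (∀ᶠ n in atTop, opApp a k r n < 0)) ∧
    ((∀ᶠ n in atTop, 0 < opApp a k r n) → ∃ Δ : ℕ, ∀ n, (r n : ℤ) < opApp a k r (n + Δ))

/-- The index tuple `z` lies in `R^m_Δ`: `z i ≥ z (i+1) + Δ` for all `i`,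
where `z (m+1) := 0`. -/
def InCone (m : ℕ) (Δ : ℕ) (z : Fin m → ℕ) : Prop :=
  ∀ i : Fin m, (if h : (i : ℕ) + 1 < m then z ⟨(i : ℕ) + 1, h⟩ else 0) + Δ ≤ z i

/-!
Sparsity applied to the positive operator `r(n+1) - r(n)` shows that shifting the index by a
fixed amount at least doubles `r`, so a large enough shift multiplies `r` by any prescribed
factor `M`. Applied to `±A₁`, sparsity also gives `r(n) < |A₁(n + Δ₀)|`. Every later term
`Aᵢ(nᵢ)` is at most a constant `Cᵢ` times `r(n₁ - Δ + K)` with `K = max Kᵢ`, and once `Δ`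
exceeds `Δ₀ + K` plus the shift for `M ≥ (Σ Cᵢ)/ε`, the later terms sum to less than
`ε·|A₁(n₁)|`.
-/

lemma opApp_neg (a : ℕ → ℤ) (k : ℕ) (r : ℕ → ℕ) (n : ℕ) :
    opApp (-a) k r n = -opApp a k r n := by
  simp [opApp, Finset.sum_neg_distrib]

lemma abs_opApp_le {r : ℕ → ℕ} (hmono : Monotone r) (a : ℕ → ℤ) (k n : ℕ) :
    |opApp a k r n| ≤ (∑ i ∈ Finset.range (k + 1), |a i|) * r (n + k) := by
  rw [Finset.sum_mul]
  refine (Finset.abs_sum_le_sum_abs _ _).trans (Finset.sum_le_sum fun i hi => ?_)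
  have hik : i ≤ k := Nat.lt_succ_iff.mp (Finset.mem_range.mp hi)
  rw [abs_mul, Nat.abs_cast]
  gcongr
  exact hmono (by omega)

lemma abs_sum_opApp_le {ι : Type*} {r : ℕ → ℕ} (hmono : Monotone r) (s : Finset ι)
    (a : ι → ℕ → ℤ) (K z : ι → ℕ) {N : ℕ} (hN : ∀ i ∈ s, z i + K i ≤ N) :
    |∑ i ∈ s, opApp (a i) (K i) r (z i)| ≤
      (∑ i ∈ s, ∑ j ∈ Finset.range (K i + 1), |a i j|) * r N := by
  rw [Finset.sum_mul]
  refine (Finset.abs_sum_le_sum_abs _ _).trans (Finset.sum_le_sum fun i hi => ?_)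
  refine (abs_opApp_le hmono _ _ _).trans ?_
  gcongr
  exact hmono (hN i hi)

lemma pow_two_mul_le_of_two_mul_le {r : ℕ → ℕ} {s : ℕ} (hr : ∀ n, 2 * r n ≤ r (n + s))
    (t n : ℕ) : 2 ^ t * r n ≤ r (n + t * s) := by
  induction t with
  | zero => simp
  | succ t ih =>
    calc 2 ^ (t + 1) * r n = 2 * (2 ^ t * r n) := by ring
      _ ≤ 2 * r (n + t * s) := by gcongr
      _ ≤ r (n + (t + 1) * s) := by
        simpa only [add_mul, one_mul, add_assoc] using hr (n + t * s)

lemma exists_mul_le_of_two_mul_le {r : ℕ → ℕ} {s : ℕ} (hr : ∀ n, 2 * r n ≤ r (n + s))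
    (M : ℕ) : ∃ s', ∀ n, M * r n ≤ r (n + s') :=
  ⟨M * s, fun n => (Nat.mul_le_mul_right _ Nat.lt_two_pow_self.le).trans
    (pow_two_mul_le_of_two_mul_le hr M n)⟩

namespace IsSparse

variable {r : ℕ → ℕ}

lemma exists_two_mul_le (hmono : StrictMono r) (hsparse : IsSparse r) :
    ∃ s, ∀ n, 2 * r n ≤ r (n + s) := by
  let diff : ℕ → ℤ := fun i => if i = 0 then -1 else 1
  have hdiff : ∀ n, opApp diff 1 r n = r (n + 1) - r n := by
    intro n
    simp [opApp, diff, Finset.sum_range_succ, neg_add_eq_sub]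
  have hpos : ∀ᶠ n in atTop, 0 < opApp diff 1 r n :=
    Eventually.of_forall fun n => by
      rw [hdiff, sub_pos]
      exact_mod_cast hmono n.lt_succ_self
  obtain ⟨Δ, hΔ⟩ := (hsparse diff 1).2 hpos
  refine ⟨Δ + 1, fun n => ?_⟩
  have hstep := hΔ n
  rw [hdiff] at hstep
  rw [← add_assoc]
  have hle : r n ≤ r (n + Δ) := hmono.monotone (Nat.le_add_right n Δ)
  omega

lemma exists_mul_le (hmono : StrictMono r) (hsparse : IsSparse r) (M : ℕ) :
    ∃ s, ∀ n, M * r n ≤ r (n + s) :=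
  let ⟨_, hs⟩ := hsparse.exists_two_mul_le hmono
  exists_mul_le_of_two_mul_le hs M

lemma exists_lt_abs_opApp (hsparse : IsSparse r) {a : ℕ → ℤ} {k : ℕ}
    (ha : ¬ ∀ n, opApp a k r n = 0) : ∃ Δ₀, ∀ n, (r n : ℤ) < |opApp a k r (n + Δ₀)| := by
  rcases (hsparse a k).1 with hzero | hpos | hneg
  · exact absurd hzero ha
  · obtain ⟨Δ₀, hΔ₀⟩ := (hsparse a k).2 hpos
    exact ⟨Δ₀, fun n => (hΔ₀ n).trans_le (le_abs_self _)⟩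
  · have hpos : ∀ᶠ n in atTop, 0 < opApp (-a) k r n := by
      filter_upwards [hneg] with n hn
      rw [opApp_neg]
      exact neg_pos.mpr hn
    obtain ⟨Δ₀, hΔ₀⟩ := (hsparse (-a) k).2 hpos
    refine ⟨Δ₀, fun n => (hΔ₀ n).trans_le ?_⟩
    rw [opApp_neg]
    exact neg_le_abs _

end IsSparse

namespace InCone

variable {m Δ : ℕ} {z : Fin m → ℕ}

lemma le_apply (hz : InCone m Δ z) (i : Fin m) : Δ ≤ z i :=
  le_of_add_le_right (hz i)

lemma succ_add_le (hz : InCone m Δ z) (i : ℕ) (h : i + 1 < m) :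
    z ⟨i + 1, h⟩ + Δ ≤ z ⟨i, by omega⟩ := by
  simpa [dif_pos h] using hz ⟨i, by omega⟩

lemma add_le_of_lt (hz : InCone m Δ z) {i j : Fin m} (hij : i < j) : z j + Δ ≤ z i := by
  obtain ⟨i, hi⟩ := i
  obtain ⟨j, hj⟩ := j
  replace hij : i + 1 ≤ j := hij
  induction j, hij using Nat.le_induction with
  | base => exact hz.succ_add_le i hj
  | succ j hij ih =>
    have := ih (by omega)
    have := hz.succ_add_le j hj
    omega

end InCone

theorem abs_add_mem_Ioo_of_abs_lt {α : Type*} [Field α] [LinearOrder α] [IsStrictOrderedRing α]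
    {x y ε : α} (hy : |y| < ε * |x|) :
    |x + y| ∈ Set.Ioo ((1 - ε) * |x|) ((1 + ε) * |x|) := by
  constructor
  · linarith [abs_sub_abs_le_abs_add x y]
  · linarith [abs_add_le x y]

theorem leading_term_dominates_general (r : ℕ → ℕ) (hmono : StrictMono r) (hsparse : IsSparse r)
    (m : ℕ) (hm : 0 < m) (a : Fin m → ℕ → ℤ) (K : Fin m → ℕ)
    (hA1 : ¬ ∀ n, opApp (a ⟨0, hm⟩) (K ⟨0, hm⟩) r n = 0)
    (ε : ℝ) (hε0 : 0 < ε) :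
    ∀ᶠ Δ : ℕ in atTop, ∀ z : Fin m → ℕ, InCone m Δ z →
      (1 - ε) * |(opApp (a ⟨0, hm⟩) (K ⟨0, hm⟩) r (z ⟨0, hm⟩) : ℝ)| <
          |((∑ i, opApp (a i) (K i) r (z i) : ℤ) : ℝ)| ∧
      |((∑ i, opApp (a i) (K i) r (z i) : ℤ) : ℝ)| <
          (1 + ε) * |(opApp (a ⟨0, hm⟩) (K ⟨0, hm⟩) r (z ⟨0, hm⟩) : ℝ)| := by
  set i₀ : Fin m := ⟨0, hm⟩
  set later := Finset.univ.erase i₀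
  set C : ℤ := ∑ i ∈ later, ∑ j ∈ Finset.range (K i + 1), |a i j|
  obtain ⟨Δ₀, hΔ₀⟩ := hsparse.exists_lt_abs_opApp hA1
  obtain ⟨M, hM⟩ := exists_nat_ge ((C : ℝ) / ε)
  obtain ⟨s, hs⟩ := hsparse.exists_mul_le hmono M
  filter_upwards [eventually_ge_atTop (Δ₀ + Finset.univ.sup K + s)] with Δ hΔ z hz
  have hΔz : Δ ≤ z i₀ := hz.le_apply i₀
  set N := z i₀ - Δ + Finset.univ.sup K
  have hN : ∀ i ∈ later, z i + K i ≤ N := fun i hi => by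
    have hi₀ : i₀ < i := by
      rw [Finset.mem_erase, Ne, Fin.ext_iff] at hi
      exact Fin.lt_def.mpr (Nat.pos_of_ne_zero hi.1)
    have := hz.add_le_of_lt hi₀
    have := Finset.le_sup (f := K) (Finset.mem_univ i)
    omega
  have hlater := abs_sum_opApp_le hmono.monotone later a K z hN
  have hgrow : M * r N ≤ r (z i₀ - Δ₀) := (hs N).trans (hmono.monotone (by omega))
  have hlead := hΔ₀ (z i₀ - Δ₀)
  rw [Nat.sub_add_cancel (by omega)] at hlead
  rw [← Finset.add_sum_erase _ _ (Finset.mem_univ i₀), Int.cast_add]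
  apply abs_add_mem_Ioo_of_abs_lt
  rw [div_le_iff₀ hε0] at hM
  calc |((∑ i ∈ later, opApp (a i) (K i) r (z i) : ℤ) : ℝ)| ≤ C * r N := by
        exact_mod_cast hlater
    _ ≤ ε * M * r N := by gcongr; linarith
    _ ≤ ε * r (z i₀ - Δ₀) := by rw [mul_assoc]; gcongr; exact_mod_cast hgrow
    _ < ε * |(opApp (a i₀) (K i₀) r (z i₀) : ℝ)| := by gcongr; exact_mod_cast hlead

/-- domination of the leading term: for sufficiently large `Δ`, the sum
`Σ_i A_i(n_i)` over a `Δ`-spread tuple has absolute value within a factor `1 ± ε`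
of `|A_1(n_1)|`. -/
theorem leading_term_dominates (r : ℕ → ℕ) (hmono : StrictMono r) (hsparse : IsSparse r)
    (m : ℕ) (hm : 0 < m) (a : Fin m → ℕ → ℤ) (K : Fin m → ℕ)
    (hA1 : ¬ ∀ n, opApp (a ⟨0, hm⟩) (K ⟨0, hm⟩) r n = 0)
    (ε : ℝ) (hε0 : 0 < ε) (hε1 : ε < 1) :
    ∀ᶠ Δ : ℕ in atTop, ∀ z : Fin m → ℕ, InCone m Δ z →
      (1 - ε) * |(opApp (a ⟨0, hm⟩) (K ⟨0, hm⟩) r (z ⟨0, hm⟩) : ℝ)| <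
          |((∑ i, opApp (a i) (K i) r (z i) : ℤ) : ℝ)| ∧
      |((∑ i, opApp (a i) (K i) r (z i) : ℤ) : ℝ)| <
          (1 + ε) * |(opApp (a ⟨0, hm⟩) (K ⟨0, hm⟩) r (z ⟨0, hm⟩) : ℝ)| :=
  leading_term_dominates_general r hmono hsparse m hm a K hA1 ε hε0
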